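/- Under the stated OLS setup, the fitted values of the joint regression satisfy the updating formula ŷ_{x,z} := Xβ̂_x + zβ̂_z = Xβ̂₀ + (z − ẑ)·β̂_z, where β̂₀ = (XᵀX)⁻¹Xᵀy are the reduced-model fitted coefficients and ẑ = X(XᵀX)⁻¹Xᵀz; that is, the joint-model fitted values equal the reduced-model fitted values plus β̂_z times the residual of z on X. -/

import Mathlib

/-!
The first `p` normal equations of the joint regression say `Xᵀ(Xβ̂_x + β̂_z z) = Xᵀy`.
Solving them for `β̂_x` with `(XᵀX)⁻¹` gives `β̂_x = β̂₀ − β̂_z (XᵀX)⁻¹Xᵀz`, and multiplying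
by `X` turns the correction term into `β̂_z ẑ`.
-/

open Matrix

section

variable {R : Type*} [CommRing R] {m : Type*} {p : ℕ}

def appendCol (X : Matrix m (Fin p) R) (z : m → R) : Matrix m (Fin (p + 1)) R :=
  Matrix.of fun i j => Fin.lastCases (z i) (fun j' => X i j') j

lemma appendCol_mulVec (X : Matrix m (Fin p) R) (z : m → R) (b : Fin (p + 1) → R) :
    appendCol X z *ᵥ b = X *ᵥ (fun j => b j.castSucc) + b (Fin.last p) • z := by
  funext i
  simp [appendCol, mulVec, dotProduct, Fin.sum_univ_castSucc, mul_comm]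

lemma transpose_appendCol_mulVec_castSucc [Fintype m] (X : Matrix m (Fin p) R) (z u : m → R)
    (j : Fin p) :
    ((appendCol X z)ᵀ *ᵥ u) j.castSucc = (Xᵀ *ᵥ u) j := by
  simp [appendCol, mulVec, dotProduct]

end

section

variable {R : Type*} [CommRing R] {m k : Type*} [Fintype m] [Fintype k] [DecidableEq k]

lemma transpose_mulVec_mulVec_nonsing_inv_mulVec (W : Matrix m k R) (y : m → R)
    (hW : IsUnit (Wᵀ * W).det) :
    Wᵀ *ᵥ (W *ᵥ ((Wᵀ * W)⁻¹ *ᵥ (Wᵀ *ᵥ y))) = Wᵀ *ᵥ y := by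
  rw [mulVec_mulVec, mulVec_mulVec, mul_nonsing_inv _ hW, one_mulVec]

lemma mulVec_add_smul_eq_of_transpose_mulVec_eq (X : Matrix m k R) (z y : m → R) (β : k → R)
    (c : R) (hX : IsUnit (Xᵀ * X).det) (hnormal : Xᵀ *ᵥ (X *ᵥ β + c • z) = Xᵀ *ᵥ y) :
    X *ᵥ β + c • z =
      X *ᵥ ((Xᵀ * X)⁻¹ *ᵥ (Xᵀ *ᵥ y)) + c • (z - X *ᵥ ((Xᵀ * X)⁻¹ *ᵥ (Xᵀ *ᵥ z))) := by
  have hβ : β = (Xᵀ * X)⁻¹ *ᵥ (Xᵀ *ᵥ y) - c • ((Xᵀ * X)⁻¹ *ᵥ (Xᵀ *ᵥ z)) := by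
    rw [← hnormal, mulVec_add, mulVec_smul, mulVec_mulVec, mulVec_add, mulVec_smul,
      mulVec_mulVec, nonsing_inv_mul _ hX, one_mulVec, add_sub_cancel_right]
  rw [hβ, mulVec_sub, mulVec_smul, smul_sub]
  abel

end

theorem ols_fitted_values_updating_formula_general
    {n p : ℕ}
    (X : Matrix (Fin n) (Fin p) ℝ) (z y : Fin n → ℝ)
    -- the augmented matrix `W = [X z]` (last column is `z`)
    (W : Matrix (Fin n) (Fin (p + 1)) ℝ)
    (hW : W = Matrix.of fun i j => Fin.lastCases (z i) (fun j' => X i j') j)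
    -- the augmented Gram matrix `[X z]ᵀ[X z]` is invertible
    (hWunit : IsUnit (Wᵀ * W).det)
    -- hence `XᵀX` is invertible
    (hXunit : IsUnit (Xᵀ * X).det)
    -- stacked joint OLS coefficients `b = ([X z]ᵀ[X z])⁻¹[X z]ᵀy`
    (b : Fin (p + 1) → ℝ) (hb : b = (Wᵀ * W)⁻¹ *ᵥ (Wᵀ *ᵥ y))
    (βx : Fin p → ℝ) (βz : ℝ)
    (hβx : βx = fun j => b j.castSucc) (hβz : βz = b (Fin.last p))
    -- `zhat = X(XᵀX)⁻¹Xᵀz` and `k = (z − zhat)ᵀ(z − zhat)`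
    (zhat : Fin n → ℝ) (hzhat : zhat = X *ᵥ ((Xᵀ * X)⁻¹ *ᵥ (Xᵀ *ᵥ z)))
    -- reduced-model OLS coefficients `β̂₀ = (XᵀX)⁻¹Xᵀy`
    (β0 : Fin p → ℝ) (hβ0 : β0 = (Xᵀ * X)⁻¹ *ᵥ (Xᵀ *ᵥ y))
    :
    X *ᵥ βx + βz • z = X *ᵥ β0 + βz • (z - zhat) := by
  obtain rfl : W = appendCol X z := hW
  have hnormal := transpose_mulVec_mulVec_nonsing_inv_mulVec _ y hWunit
  rw [← hb, appendCol_mulVec] at hnormal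
  have hnormalX : Xᵀ *ᵥ (X *ᵥ βx + βz • z) = Xᵀ *ᵥ y := by
    funext j
    simpa only [hβx, hβz, transpose_appendCol_mulVec_castSucc] using congrFun hnormal j.castSucc
  rw [hzhat, hβ0]
  exact mulVec_add_smul_eq_of_transpose_mulVec_eq X z y βx βz hXunit hnormalX

/-- **Frisch–Waugh representation of the OLS coefficient of `z`.**
Under the stated OLS setup (joint OLS coefficients `(β̂_x, β̂_z)` obtained by stacking
them as `([X z]ᵀ[X z])⁻¹[X z]ᵀy`), the coefficient of `z` satisfies
`β̂_z = (z − zhat)ᵀy / k`, where `zhat = X(XᵀX)⁻¹Xᵀz` and `k = (z − zhat)ᵀ(z − zhat)`. -/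
theorem ols_fitted_values_updating_formula
    {n p : ℕ} (hn : 0 < n) (hp : 0 < p)
    (X : Matrix (Fin n) (Fin p) ℝ) (z y : Fin n → ℝ)
    -- the augmented matrix `W = [X z]` (last column is `z`)
    (W : Matrix (Fin n) (Fin (p + 1)) ℝ)
    (hW : W = Matrix.of fun i j => Fin.lastCases (z i) (fun j' => X i j') j)
    -- the augmented Gram matrix `[X z]ᵀ[X z]` is invertible
    (hWunit : IsUnit (Wᵀ * W).det)
    -- hence `XᵀX` is invertible
    (hXunit : IsUnit (Xᵀ * X).det)
    -- stacked joint OLS coefficients `b = ([X z]ᵀ[X z])⁻¹[X z]ᵀy`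
    (b : Fin (p + 1) → ℝ) (hb : b = (Wᵀ * W)⁻¹ *ᵥ (Wᵀ *ᵥ y))
    (βx : Fin p → ℝ) (βz : ℝ)
    (hβx : βx = fun j => b j.castSucc) (hβz : βz = b (Fin.last p))
    -- `zhat = X(XᵀX)⁻¹Xᵀz` and `k = (z − zhat)ᵀ(z − zhat)`
    (zhat : Fin n → ℝ) (hzhat : zhat = X *ᵥ ((Xᵀ * X)⁻¹ *ᵥ (Xᵀ *ᵥ z)))
    (k : ℝ) (hk : k = (z - zhat) ⬝ᵥ (z - zhat))
    -- reduced-model OLS coefficients `β̂₀ = (XᵀX)⁻¹Xᵀy`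
    (β0 : Fin p → ℝ) (hβ0 : β0 = (Xᵀ * X)⁻¹ *ᵥ (Xᵀ *ᵥ y))
    :
    X *ᵥ βx + βz • z = X *ᵥ β0 + βz • (z - zhat) :=
  ols_fitted_values_updating_formula_general X z y W hW hWunit hXunit b hb βx βz hβx hβz zhat hzhat
    β0 hβ0
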